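/- The Jacobian of the one-step Galerkin method applied to the simple harmonic oscillator (with m = 1, ω = 1), given by the matrix with entries a11 = 2(Δt⁴-52Δt²+120)/(Δt⁴+16Δt²+240), a12 = Δt(Δt⁴-132Δt²+1440)/(6(Δt⁴+16Δt²+240)), a21 = -Δt(Δt⁴-130Δt²+1200)/(5(Δt⁴+16Δt²+240)), a22 = -(Δt⁶-240Δt⁴+6240Δt²-14400)/(60(Δt⁴+16Δt²+240)), has determinant 1, hence is symplectic. -/

import Mathlib

open Matrix in
theorem stmt_15 (Δt : ℝ)
    (A : Matrix (Fin 2) (Fin 2) ℝ)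
    (hA : A = !![2*(Δt^4 - 52*Δt^2 + 120) / (Δt^4 + 16*Δt^2 + 240),
                 Δt*(Δt^4 - 132*Δt^2 + 1440) / (6*(Δt^4 + 16*Δt^2 + 240));
                 -(Δt*(Δt^4 - 130*Δt^2 + 1200)) / (5*(Δt^4 + 16*Δt^2 + 240)),
                 -(Δt^6 - 240*Δt^4 + 6240*Δt^2 - 14400) / (60*(Δt^4 + 16*Δt^2 + 240))]) :
    A.det = 1 := by
  subst hA
  have hden : Δt^4 + 16*Δt^2 + 240 ≠ 0 := by positivity
  rw [Matrix.det_fin_two_of]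
  field_simp
  ring
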